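/- Let ℓ^i = N_{p,r}(x^i,d^i,l^i,u^i) and ℓ^j = N_{p,r}(x^j,d^j,l^j,u^j) be two finite needles, p ≥ 1, r > 0, and ε > 0. Suppose there exist v^0 in R^3 and nonnegative scalars v^1,...,v^6 satisfying: (x^i - x^j)·v^0 - l^i v^1 + u^i v^2 - l^j v^4 + u^j v^5 + r v^3 + r v^6 ≤ -ε; -(d^i)·v^0 - v^1 + v^2 = 0; (d^j)·v^0 - v^4 + v^5 = 0; ||v^0||_q ≤ v^3 and ||v^0||_q ≤ v^6 (where 1/p + 1/q = 1). Then ℓ^i ∩ ℓ^j = ∅. -/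

import Mathlib

/-!
The certificate bounds the separating functional `χ ↦ χ ⬝ v⁰`. On a needle `x + τ d + ρ` one has
`χ ⬝ w = x ⬝ w + τ (d ⬝ w) + ρ ⬝ w`; writing `d ⬝ w` as a difference of nonnegative multipliers
bounds the middle term through `l ≤ τ ≤ u`, and Hölder gives `ρ ⬝ w ≤ r ‖w‖_q`. With `w = v⁰` on
`ℓⁱ` and `w = -v⁰` on `ℓʲ`, the two bounds add up to `0 ≤ -ε` at any common point.
-/

open scoped ENNReal

/-- The `p`-norm of a vector in ℝ³, with `p = ∞` allowed. -/
noncomputable def pnorm (p : ℝ≥0∞) (v : Fin 3 → ℝ) : ℝ :=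
  if p = ⊤ then max (max |v 0| |v 1|) |v 2|
  else (∑ i, |v i| ^ p.toReal) ^ (1 / p.toReal)

/-- The needle `N_{p,r}(x,d,l,u)`. -/
def needle (p : ℝ≥0∞) (r : ℝ) (x d : Fin 3 → ℝ) (l u : ℝ) : Set (Fin 3 → ℝ) :=
  {χ | ∃ τ ρ, l ≤ τ ∧ τ ≤ u ∧ pnorm p ρ ≤ r ∧ χ = x + τ • d + ρ}

/-- Euclidean inner product on ℝ³. -/
def dot (v w : Fin 3 → ℝ) : ℝ :=
  ∑ i, v i * w i

lemma dot_eq_dotProduct (v w : Fin 3 → ℝ) : dot v w = v ⬝ᵥ w := rfl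

lemma dot_comm (v w : Fin 3 → ℝ) : dot v w = dot w v := dotProduct_comm v w

lemma dot_neg (v w : Fin 3 → ℝ) : dot v (-w) = -dot v w := dotProduct_neg v w

lemma sub_dot (u v w : Fin 3 → ℝ) : dot (u - v) w = dot u w - dot v w := sub_dotProduct u v w

lemma pnorm_nonneg (p : ℝ≥0∞) (v : Fin 3 → ℝ) : 0 ≤ pnorm p v := by
  unfold pnorm
  split_ifs <;> positivity

lemma pnorm_neg (p : ℝ≥0∞) (v : Fin 3 → ℝ) : pnorm p (-v) = pnorm p v := by
  simp only [pnorm, Pi.neg_apply, abs_neg]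

lemma pnorm_one (v : Fin 3 → ℝ) : pnorm 1 v = ∑ i, |v i| := by
  simp [pnorm]

lemma abs_le_pnorm_top (v : Fin 3 → ℝ) (i : Fin 3) : |v i| ≤ pnorm ⊤ v := by
  simp only [pnorm, if_pos]
  fin_cases i <;> simp

lemma dot_le_pnorm_top_mul_pnorm_one (a b : Fin 3 → ℝ) :
    dot a b ≤ pnorm ⊤ a * pnorm 1 b := by
  rw [pnorm_one, Finset.mul_sum]
  refine Finset.sum_le_sum fun i _ => ?_
  calc a i * b i ≤ |a i| * |b i| := by rw [← abs_mul]; exact le_abs_self _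
    _ ≤ pnorm ⊤ a * |b i| := by gcongr; exact abs_le_pnorm_top a i

lemma dot_le_pnorm_mul_pnorm (p q : ℝ≥0∞) [p.HolderConjugate q] (a b : Fin 3 → ℝ) :
    dot a b ≤ pnorm p a * pnorm q b := by
  by_cases hp : p = ⊤
  · obtain rfl : q = 1 := (ENNReal.HolderConjugate.eq_top_iff_eq_one p q).mp hp
    subst hp
    exact dot_le_pnorm_top_mul_pnorm_one a b
  by_cases hq : q = ⊤
  · obtain rfl : p = 1 := (ENNReal.HolderConjugate.eq_top_iff_eq_one q p).mp hq
    subst hq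
    rw [dot_comm, mul_comm]
    exact dot_le_pnorm_top_mul_pnorm_one b a
  simp only [pnorm, if_neg hp, if_neg hq]
  exact Real.inner_le_Lp_mul_Lq Finset.univ a b
    (ENNReal.HolderConjugate.toReal_of_ne_top hp hq)

lemma dot_le_of_mem_needle {p q : ℝ≥0∞} [p.HolderConjugate q] {r : ℝ} {x d χ w : Fin 3 → ℝ}
    {l u a b s : ℝ} (hχ : χ ∈ needle p r x d l u) (ha : 0 ≤ a) (hb : 0 ≤ b)
    (hd : dot d w = b - a) (hw : pnorm q w ≤ s) :
    dot χ w ≤ dot x w - l * a + u * b + r * s := by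
  obtain ⟨τ, ρ, hlτ, hτu, hρ, rfl⟩ := hχ
  have hρw : dot ρ w ≤ r * s :=
    (dot_le_pnorm_mul_pnorm p q ρ w).trans <|
      mul_le_mul hρ hw (pnorm_nonneg q w) ((pnorm_nonneg p ρ).trans hρ)
  have hτ : τ * (b - a) ≤ u * b - l * a := by
    linarith [mul_le_mul_of_nonneg_right hτu hb, mul_le_mul_of_nonneg_right hlτ ha]
  simp only [dot_eq_dotProduct, add_dotProduct, smul_dotProduct, smul_eq_mul] at hd hρw ⊢
  rw [hd]
  linarith

theorem finite_needles_disjoint_general (p q : ℝ≥0∞)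
    (hpq : 1 / p + 1 / q = 1) (r : ℝ) (ε : ℝ) (hε : 0 < ε)
    (xi di xj dj : Fin 3 → ℝ) (li ui lj uj : ℝ)
    (v0 : Fin 3 → ℝ) (v1 v2 v3 v4 v5 v6 : ℝ)
    (hv1 : 0 ≤ v1) (hv2 : 0 ≤ v2)
    (hv4 : 0 ≤ v4) (hv5 : 0 ≤ v5)
    (hineq : dot (xi - xj) v0 - li * v1 + ui * v2 - lj * v4 + uj * v5
        + r * v3 + r * v6 ≤ -ε)
    (heqi : -dot di v0 - v1 + v2 = 0)
    (heqj : dot dj v0 - v4 + v5 = 0)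
    (hcone3 : pnorm q v0 ≤ v3) (hcone6 : pnorm q v0 ≤ v6) :
    needle p r xi di li ui ∩ needle p r xj dj lj uj = ∅ := by
  have hconj : p.HolderConjugate q :=
    ENNReal.holderConjugate_iff.mpr (by simpa only [one_div] using hpq)
  rw [Set.eq_empty_iff_forall_notMem]
  rintro χ ⟨hχi, hχj⟩
  have hupper := dot_le_of_mem_needle (w := v0) hχi hv1 hv2 (by linarith) hcone3
  have hlower := dot_le_of_mem_needle (w := -v0) (s := v6) hχj hv4 hv5
    (by rw [dot_neg]; linarith)
    (by rwa [pnorm_neg])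
  rw [dot_neg, dot_neg] at hlower
  rw [sub_dot] at hineq
  linarith

theorem finite_needles_disjoint (p q : ℝ≥0∞) (hp : 1 ≤ p) (hq : 1 ≤ q)
    (hpq : 1 / p + 1 / q = 1) (r : ℝ) (hr : 0 < r) (ε : ℝ) (hε : 0 < ε)
    (xi di xj dj : Fin 3 → ℝ) (li ui lj uj : ℝ) (hi : li ≤ ui) (hj : lj ≤ uj)
    (v0 : Fin 3 → ℝ) (v1 v2 v3 v4 v5 v6 : ℝ)
    (hv1 : 0 ≤ v1) (hv2 : 0 ≤ v2) (hv3 : 0 ≤ v3)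
    (hv4 : 0 ≤ v4) (hv5 : 0 ≤ v5) (hv6 : 0 ≤ v6)
    (hineq : dot (xi - xj) v0 - li * v1 + ui * v2 - lj * v4 + uj * v5
        + r * v3 + r * v6 ≤ -ε)
    (heqi : -dot di v0 - v1 + v2 = 0)
    (heqj : dot dj v0 - v4 + v5 = 0)
    (hcone3 : pnorm q v0 ≤ v3) (hcone6 : pnorm q v0 ≤ v6) :
    needle p r xi di li ui ∩ needle p r xj dj lj uj = ∅ :=
  finite_needles_disjoint_general p q hpq r ε hε xi di xj dj li ui lj uj v0 v1 v2 v3 v4 v5 v6 hv1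
    hv2 hv4 hv5 hineq heqi heqj hcone3 hcone6
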